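/- For every natural number N, the function c ↦ ∫_{−∞}^{∞} e^{−c·cosh y} dy − √(2π/c)·e^{−c}·Σ_{n=0}^{N} (−1)^n·((2n−1)!!)²/(n!·8^n·c^n) is O(e^{−c}·c^{−N−3/2}) as c → +∞ along the reals. -/

import Mathlib

open MeasureTheory Asymptotics Filter

/-- The odd double factorial `(2n−1)!! = (2n)!/(2ⁿ·n!)`, with `(−1)!! = 1`. -/
noncomputable def oddDoubleFactorial (n : ℕ) : ℝ :=
  (Nat.factorial (2 * n) : ℝ) / (2 ^ n * (Nat.factorial n : ℝ))

/-!
Substituting `t = sinh (y / 2)` turns `cosh y` into `1 + 2 t²` and `dy` into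
`2 dt / √(1 + t²)`, so `∫ e^{-c cosh y} dy = 2 e^{-c} ∫ e^{-2c t²} (1 + t²)^{-1/2} dt`.
Expanding `(1 + t²)^{-1/2}` by the binomial series, the Gaussian moments
`∫ t^{2n} e^{-2c t²} dt = Γ(n + 1/2) / (2c)^{n + 1/2}` give exactly the terms of the expansion.
For an exponent `α ≤ 0` and `u ≥ 0` the remainder of `(1 + u)^α` after `M` terms is at most
the first omitted term `|binom(α, M)| u^M`, since its derivative is `α` times the remainder for
`α - 1` after `M - 1` terms; integrated against the Gaussian it is `O(c^{-N-3/2})`.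
-/

open Real Finset
open scoped Nat

section BinomialCoefficients

variable {K : Type*} [Field K] [CharZero K]

open Polynomial in
theorem Ring.mul_choose_sub_one_eq (a : K) (n : ℕ) :
    a * Ring.choose (a - 1) n = Ring.choose a (n + 1) * (n + 1) := by
  rw [Ring.choose_eq_smul, Ring.choose_eq_smul, descPochhammer_succ_left, smeval_mul, smeval_X,
    smeval_comp, smeval_sub, smeval_X, smeval_one]
  simp only [smul_eq_mul, Nat.factorial_succ, pow_one, one_smul]
  push_cast
  field_simp

open Polynomial in
theorem Ring.choose_succ_right_eq (a : K) (n : ℕ) :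
    Ring.choose a (n + 1) * (n + 1) = Ring.choose a n * (a - n) := by
  rw [Ring.choose_eq_smul, Ring.choose_eq_smul, descPochhammer_succ_right, smeval_mul,
    smeval_sub, smeval_X, smeval_natCast]
  simp only [smul_eq_mul, Nat.factorial_succ, pow_one, pow_zero, nsmul_eq_mul, mul_one]
  push_cast
  field_simp

end BinomialCoefficients

theorem Real.choose_neg_one_half (n : ℕ) :
    Ring.choose (-(1 / 2) : ℝ) n = (-1) ^ n * (2 * n - 1 : ℕ)‼ / (2 ^ n * n !) := by
  induction n with
  | zero => simp
  | succ n ih =>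
    rw [eq_div_of_mul_eq (by positivity : (n : ℝ) + 1 ≠ 0) (Ring.choose_succ_right_eq _ n), ih,
      show 2 * (n + 1) - 1 = 2 * n + 1 by omega, Nat.doubleFactorial_add_one, Nat.factorial_succ]
    push_cast
    field_simp
    ring

theorem oddDoubleFactorial_eq_doubleFactorial (n : ℕ) :
    oddDoubleFactorial n = (2 * n - 1 : ℕ)‼ := by
  rcases n with _ | n
  · simp [oddDoubleFactorial]
  · have h := Nat.factorial_eq_mul_doubleFactorial (2 * n + 1)
    rw [show 2 * n + 1 + 1 = 2 * (n + 1) by ring, Nat.doubleFactorial_two_mul] at h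
    rw [oddDoubleFactorial, h, show 2 * (n + 1) - 1 = 2 * n + 1 by omega]
    push_cast
    field_simp

noncomputable def binomialRemainder (α : ℝ) (M : ℕ) (u : ℝ) : ℝ :=
  (1 + u) ^ α - ∑ n ∈ range M, Ring.choose α n * u ^ n

theorem continuousOn_binomialRemainder (α : ℝ) (M : ℕ) :
    ContinuousOn (binomialRemainder α M) (Set.Ioi (-1)) := by
  refine ContinuousOn.sub ?_ (by fun_prop)
  refine (continuousOn_const.add continuousOn_id).rpow_const fun u (hu : -1 < u) => ?_
  exact Or.inl (ne_of_gt (show (0 : ℝ) < 1 + u by linarith))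

theorem hasDerivAt_binomialRemainder (α : ℝ) (M : ℕ) {u : ℝ} (hu : -1 < u) :
    HasDerivAt (binomialRemainder α (M + 1)) (α * binomialRemainder (α - 1) M u) u := by
  have hpos : 0 < 1 + u := by linarith
  have hpow : HasDerivAt (fun u : ℝ => (1 + u) ^ α) (α * (1 + u) ^ (α - 1)) u := by
    simpa using ((hasDerivAt_id u).const_add 1).rpow_const (p := α) (Or.inl hpos.ne')
  have hsum := HasDerivAt.fun_sum (u := range (M + 1))
    fun n _ => (hasDerivAt_pow n u).const_mul (Ring.choose α n)
  have hsum_deriv : ∑ n ∈ range (M + 1), Ring.choose α n * (n * u ^ (n - 1))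
      = α * ∑ n ∈ range M, Ring.choose (α - 1) n * u ^ n := by
    rw [sum_range_succ', mul_sum]
    simp only [Nat.cast_zero, zero_mul, mul_zero, add_zero, Nat.add_sub_cancel]
    refine sum_congr rfl fun n _ => ?_
    rw [← mul_assoc α, Ring.mul_choose_sub_one_eq]
    push_cast
    ring
  exact (hpow.sub hsum).congr_deriv (by rw [hsum_deriv]; unfold binomialRemainder; ring)

theorem binomialRemainder_succ_eq_integral (α : ℝ) (M : ℕ) {u : ℝ} (hu : -1 < u) :
    binomialRemainder α (M + 1) u = ∫ x in 0..u, α * binomialRemainder (α - 1) M x := by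
  have hsub : Set.uIcc 0 u ⊆ Set.Ioi (-1) := fun x hx => by
    rcases Set.mem_uIcc.1 hx with h | h <;> exact Set.mem_Ioi.2 (by linarith)
  have hzero : binomialRemainder α (M + 1) 0 = 0 := by
    simp [binomialRemainder, sum_range_succ']
  rw [intervalIntegral.integral_eq_sub_of_hasDerivAt
    (fun x hx => hasDerivAt_binomialRemainder α M (hsub hx))
    ((continuousOn_const.mul ((continuousOn_binomialRemainder _ M).mono hsub)).intervalIntegrable),
    hzero, sub_zero]

theorem abs_binomialRemainder_le {α : ℝ} (hα : α ≤ 0) (M : ℕ) {u : ℝ} (hu : 0 ≤ u) :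
    |binomialRemainder α M u| ≤ |Ring.choose α M| * u ^ M := by
  induction M generalizing α u with
  | zero =>
    simpa [binomialRemainder, abs_of_nonneg (rpow_nonneg (by linarith : (0 : ℝ) ≤ 1 + u) α)]
      using rpow_le_one_of_one_le_of_nonpos (by linarith) hα
  | succ M ih =>
    have hbound : ∀ x ∈ Set.Ioc 0 u,
        ‖α * binomialRemainder (α - 1) M x‖ ≤ |α| * |Ring.choose (α - 1) M| * x ^ M :=
      fun x hx => by
        rw [norm_mul, Real.norm_eq_abs, mul_assoc]
        exact mul_le_mul_of_nonneg_left (ih (by linarith) hx.1.le) (abs_nonneg α)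
    have hint := intervalIntegral.norm_integral_le_of_norm_le hu (Eventually.of_forall hbound)
      ((continuous_const.mul (continuous_pow M)).intervalIntegrable (μ := volume) 0 u)
    rw [binomialRemainder_succ_eq_integral α M (by linarith), ← Real.norm_eq_abs]
    refine hint.trans_eq ?_
    rw [intervalIntegral.integral_const_mul, integral_pow, ← abs_mul, Ring.mul_choose_sub_one_eq,
      abs_mul, abs_of_pos (by positivity : (0 : ℝ) < M + 1)]
    field_simp
    ring

theorem integrable_pow_mul_exp_neg_mul_sq {b : ℝ} (hb : 0 < b) (n : ℕ) :
    Integrable fun t : ℝ => t ^ n * exp (-b * t ^ 2) := by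
  simpa using
    integrable_rpow_mul_exp_neg_mul_sq hb (s := n) (by linarith [n.cast_nonneg (α := ℝ)])

theorem integral_pow_two_mul_mul_exp_neg_mul_sq {b : ℝ} (hb : 0 < b) (n : ℕ) :
    ∫ t : ℝ, t ^ (2 * n) * exp (-b * t ^ 2) = Gamma (n + 1 / 2) / b ^ ((n : ℝ) + 1 / 2) := by
  have heven : ∫ t : ℝ, t ^ (2 * n) * exp (-b * t ^ 2)
      = 2 * ∫ t in Set.Ioi (0 : ℝ), t ^ (2 * n) * exp (-b * t ^ 2) := by
    rw [← integral_comp_abs (f := fun t => t ^ (2 * n) * exp (-b * t ^ 2))]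
    simp only [(even_two_mul n).pow_abs, sq_abs]
  have hrpow : ∫ t in Set.Ioi (0 : ℝ), t ^ (2 * n) * exp (-b * t ^ 2)
      = ∫ t in Set.Ioi (0 : ℝ), t ^ ((2 * n : ℕ) : ℝ) * exp (-b * t ^ (2 : ℝ)) := by
    simp only [rpow_natCast, rpow_two]
  have hq : (-1 : ℝ) < (2 * n : ℕ) := by linarith [(2 * n).cast_nonneg (α := ℝ)]
  have hexp : ((2 * n : ℕ) + 1 : ℝ) / 2 = n + 1 / 2 := by push_cast; ring
  rw [heven, hrpow, integral_rpow_mul_exp_neg_mul_rpow two_pos hq hb, neg_div, hexp,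
    rpow_neg hb.le]
  ring

theorem integrable_exp_neg_mul_sq_mul_one_add_sq_rpow {b α : ℝ} (hb : 0 < b) (hα : α ≤ 0) :
    Integrable fun t : ℝ => exp (-b * t ^ 2) * (1 + t ^ 2) ^ α := by
  refine (integrable_exp_neg_mul_sq hb).mono' (by fun_prop) (Eventually.of_forall fun t => ?_)
  have h1 : 1 ≤ 1 + t ^ 2 := by nlinarith [sq_nonneg t]
  rw [norm_mul, Real.norm_of_nonneg (exp_pos _).le,
    Real.norm_of_nonneg (rpow_nonneg (by linarith) α)]
  exact mul_le_of_le_one_right (exp_pos _).le (rpow_le_one_of_one_le_of_nonpos h1 hα)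

theorem exp_neg_mul_sq_mul_sum_eq (b : ℝ) (a : ℕ → ℝ) (M : ℕ) :
    (fun t : ℝ => exp (-b * t ^ 2) * ∑ n ∈ range M, a n * (t ^ 2) ^ n)
      = fun t => ∑ n ∈ range M, a n * (t ^ (2 * n) * exp (-b * t ^ 2)) := by
  ext t
  rw [mul_sum]
  exact sum_congr rfl fun n _ => by rw [pow_mul]; ring

theorem integrable_exp_neg_mul_sq_mul_sum {b : ℝ} (hb : 0 < b) (a : ℕ → ℝ) (M : ℕ) :
    Integrable fun t : ℝ => exp (-b * t ^ 2) * ∑ n ∈ range M, a n * (t ^ 2) ^ n := by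
  rw [exp_neg_mul_sq_mul_sum_eq]
  exact integrable_finsetSum _ fun n _ => (integrable_pow_mul_exp_neg_mul_sq hb _).const_mul _

theorem integral_exp_neg_mul_sq_mul_sum {b : ℝ} (hb : 0 < b) (a : ℕ → ℝ) (M : ℕ) :
    ∫ t : ℝ, exp (-b * t ^ 2) * ∑ n ∈ range M, a n * (t ^ 2) ^ n
      = ∑ n ∈ range M, a n * (Gamma (n + 1 / 2) / b ^ ((n : ℝ) + 1 / 2)) := by
  rw [exp_neg_mul_sq_mul_sum_eq, integral_finsetSum _
    fun n _ => (integrable_pow_mul_exp_neg_mul_sq hb _).const_mul _]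
  simp only [integral_const_mul, integral_pow_two_mul_mul_exp_neg_mul_sq hb]

theorem integral_exp_neg_mul_sq_mul_binomialRemainder {α b : ℝ} (hα : α ≤ 0) (hb : 0 < b)
    (M : ℕ) :
    ∫ t : ℝ, exp (-b * t ^ 2) * binomialRemainder α M (t ^ 2)
      = (∫ t : ℝ, exp (-b * t ^ 2) * (1 + t ^ 2) ^ α)
        - ∑ n ∈ range M, Ring.choose α n * (Gamma (n + 1 / 2) / b ^ ((n : ℝ) + 1 / 2)) := by
  simp only [binomialRemainder, mul_sub]
  rw [integral_sub (integrable_exp_neg_mul_sq_mul_one_add_sq_rpow hb hα)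
    (integrable_exp_neg_mul_sq_mul_sum hb _ M), integral_exp_neg_mul_sq_mul_sum hb]

theorem abs_integral_exp_neg_mul_sq_mul_binomialRemainder_le {α b : ℝ} (hα : α ≤ 0)
    (hb : 0 < b) (M : ℕ) :
    |∫ t : ℝ, exp (-b * t ^ 2) * binomialRemainder α M (t ^ 2)|
      ≤ |Ring.choose α M| * (Gamma (M + 1 / 2) / b ^ ((M : ℝ) + 1 / 2)) := by
  rw [← integral_pow_two_mul_mul_exp_neg_mul_sq hb, ← integral_const_mul, ← Real.norm_eq_abs]
  refine norm_integral_le_of_norm_le ((integrable_pow_mul_exp_neg_mul_sq hb _).const_mul _)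
    (Eventually.of_forall fun t => ?_)
  rw [norm_mul, Real.norm_of_nonneg (exp_pos _).le, Real.norm_eq_abs, pow_mul]
  calc exp (-b * t ^ 2) * |binomialRemainder α M (t ^ 2)|
      ≤ exp (-b * t ^ 2) * (|Ring.choose α M| * (t ^ 2) ^ M) :=
        mul_le_mul_of_nonneg_left (abs_binomialRemainder_le hα M (sq_nonneg t)) (exp_pos _).le
    _ = |Ring.choose α M| * ((t ^ 2) ^ M * exp (-b * t ^ 2)) := by ring

theorem integral_comp_cosh {E : Type*} [NormedAddCommGroup E] [NormedSpace ℝ E] (f : ℝ → E) :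
    ∫ y, f (cosh y) = ∫ t, (2 * (1 + t ^ 2) ^ (-(1 / 2) : ℝ)) • f (1 + 2 * t ^ 2) := by
  have hderiv : ∀ y ∈ Set.univ,
      HasDerivWithinAt (fun y => sinh (y / 2)) (cosh (y / 2) * (1 / 2)) Set.univ y := fun y _ => by
    exact ((hasDerivAt_sinh (y / 2)).comp y ((hasDerivAt_id y).div_const 2)).hasDerivWithinAt
  have hinj : Set.InjOn (fun y => sinh (y / 2)) Set.univ := fun a _ b _ h => by
    have := sinh_injective h
    linarith
  have himage : (fun y => sinh (y / 2)) '' Set.univ = Set.univ := by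
    refine Set.image_univ.trans (Set.range_eq_univ.2 fun t => ?_)
    obtain ⟨y, rfl⟩ := sinh_surjective t
    exact ⟨2 * y, by simp⟩
  have hsubst := integral_image_eq_integral_abs_deriv_smul MeasurableSet.univ hderiv hinj
    fun t => (2 * (1 + t ^ 2) ^ (-(1 / 2) : ℝ)) • f (1 + 2 * t ^ 2)
  rw [himage, setIntegral_univ, setIntegral_univ] at hsubst
  rw [hsubst]
  congr 1
  ext y
  have hcosh : 0 < cosh (y / 2) := cosh_pos _
  have hsq : 1 + sinh (y / 2) ^ 2 = cosh (y / 2) ^ 2 := by rw [cosh_sq]; ring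
  have hcosh_y : 1 + 2 * sinh (y / 2) ^ 2 = cosh y := by
    have h := cosh_two_mul (y / 2)
    rw [mul_div_cancel₀ y two_ne_zero, cosh_sq] at h
    linarith
  have hrpow : (cosh (y / 2) ^ 2) ^ (-(1 / 2) : ℝ) = (cosh (y / 2))⁻¹ := by
    rw [← rpow_natCast, ← rpow_mul hcosh.le]
    norm_num [rpow_neg_one]
  rw [smul_smul, hsq, hrpow, hcosh_y, abs_of_pos (by positivity)]
  field_simp
  simp

theorem sqrt_two_pi_div_mul_expansion_term_eq {c : ℝ} (hc : 0 < c) (n : ℕ) :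
    √(2 * π / c) * ((-1 : ℝ) ^ n * oddDoubleFactorial n ^ 2 / (n ! * 8 ^ n * c ^ n))
      = 2 * (Ring.choose (-(1 / 2) : ℝ) n *
          (Gamma (n + 1 / 2) / (2 * c) ^ ((n : ℝ) + 1 / 2))) := by
  have hsqrt : √π = √(2 * π / c) * √(2 * c) / 2 := by
    rw [← sqrt_mul (by positivity), show 2 * π / c * (2 * c) = 2 ^ 2 * π by field_simp,
      sqrt_mul (by positivity), sqrt_sq zero_le_two]
    ring
  rw [oddDoubleFactorial_eq_doubleFactorial, Real.choose_neg_one_half, Gamma_nat_add_half,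
    hsqrt, rpow_add (by positivity), rpow_natCast, ← sqrt_eq_rpow,
    show (8 : ℝ) ^ n = 2 ^ n * 2 ^ n * 2 ^ n by rw [← mul_pow, ← mul_pow]; norm_num]
  field_simp
  ring

theorem integral_exp_neg_mul_cosh_sub_series_eq {c : ℝ} (hc : 0 < c) (N : ℕ) :
    (∫ y, exp (-c * cosh y)) - √(2 * π / c) * exp (-c) *
        ∑ n ∈ range (N + 1), (-1 : ℝ) ^ n * oddDoubleFactorial n ^ 2 / (n ! * 8 ^ n * c ^ n)
      = 2 * exp (-c) *
          ∫ t, exp (-(2 * c) * t ^ 2) * binomialRemainder (-(1 / 2)) (N + 1) (t ^ 2) := by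
  have hcosh : ∫ y, exp (-c * cosh y)
      = 2 * exp (-c) * ∫ t, exp (-(2 * c) * t ^ 2) * (1 + t ^ 2) ^ (-(1 / 2) : ℝ) := by
    rw [integral_comp_cosh fun x => exp (-c * x), ← integral_const_mul]
    congr 1
    ext t
    rw [smul_eq_mul, show -c * (1 + 2 * t ^ 2) = -c + -(2 * c) * t ^ 2 by ring, exp_add]
    ring
  have hseries : √(2 * π / c) *
        ∑ n ∈ range (N + 1), (-1 : ℝ) ^ n * oddDoubleFactorial n ^ 2 / (n ! * 8 ^ n * c ^ n)
      = 2 * ∑ n ∈ range (N + 1),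
          Ring.choose (-(1 / 2) : ℝ) n * (Gamma (n + 1 / 2) / (2 * c) ^ ((n : ℝ) + 1 / 2)) := by
    rw [mul_sum, mul_sum]
    exact sum_congr rfl fun n _ => sqrt_two_pi_div_mul_expansion_term_eq hc n
  rw [integral_exp_neg_mul_sq_mul_binomialRemainder (by norm_num) (by positivity), hcosh]
  linear_combination (-exp (-c)) * hseries

/-- Stationary phase expansion of the B-model oscillating integral `∫ e^{−c cosh y} dy`
through the critical point `P₂` of the mirror superpotential of ℙ¹. -/
theorem stationary_phase_expansion (N : ℕ) :
    (fun c : ℝ =>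
        (∫ y : ℝ, Real.exp (-c * Real.cosh y)) -
          Real.sqrt (2 * Real.pi / c) * Real.exp (-c) *
            ∑ n ∈ Finset.range (N + 1),
              (-1 : ℝ) ^ n * (oddDoubleFactorial n) ^ 2 /
                ((Nat.factorial n : ℝ) * 8 ^ n * c ^ n)) =O[atTop]
      fun c : ℝ => Real.exp (-c) * c ^ (-(N : ℝ) - 3 / 2) := by
  refine isBigO_iff.2 ⟨2 * |Ring.choose (-(1 / 2) : ℝ) (N + 1)| * Gamma (N + 1 + 1 / 2)
    / 2 ^ ((N : ℝ) + 3 / 2), ?_⟩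
  filter_upwards [eventually_gt_atTop 0] with c hc
  have hremainder := abs_integral_exp_neg_mul_sq_mul_binomialRemainder_le
    (by norm_num : (-(1 / 2) : ℝ) ≤ 0) (by positivity : 0 < 2 * c) (N + 1)
  have hscale : (2 * c) ^ (((N + 1 : ℕ) : ℝ) + 1 / 2)
      = 2 ^ ((N : ℝ) + 3 / 2) * c ^ ((N : ℝ) + 3 / 2) := by
    rw [mul_rpow zero_le_two hc.le]
    push_cast
    ring_nf
  rw [integral_exp_neg_mul_cosh_sub_series_eq hc N, norm_mul, Real.norm_eq_abs, Real.norm_eq_abs]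
  refine (mul_le_mul_of_nonneg_left hremainder (abs_nonneg _)).trans_eq ?_
  rw [abs_of_pos (by positivity), Real.norm_of_nonneg (by positivity), hscale,
    show -(N : ℝ) - 3 / 2 = -((N : ℝ) + 3 / 2) by ring, rpow_neg hc.le]
  push_cast
  field_simp
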